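/- Let Δ be a countable homogeneous structure in a finite relational language, let c_1,…,c_n be elements of Δ, and let f, g be m-ary operations on the domain of Δ, both canonical on (Δ,c_1,…,c_n), with identical type functions, i.e., for every k and every tuple a^1,…,a^k ∈ Δ^m the tuples (f(a^1),…,f(a^k)) and (g(a^1),…,g(a^k)) have the same type in (Δ,c_1,…,c_n). Then for every function clone C on the domain of Δ that contains every automorphism of Δ and whose arity-wise parts are closed in the topology of pointwise convergence, f ∈ C if and only if g ∈ C. -/

import Mathlib

/-!
Fix a finite tuple of arguments `a¹, …, aᵏ`. The tuples `(f aʲ)ⱼ` and `(g aʲ)ⱼ` have the same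
type over `c`, so by homogeneity some automorphism `e` maps the first onto the second. Thus
`e ∘ f`, which lies in every clone containing `f` and `Aut(Δ)`, agrees with `g` on the given
arguments; `g` is therefore in the closure of such a clone, and hence in the clone if it is closed.
-/

open FirstOrder FirstOrder.Language

/-- The tuples `a` and `b` have the same type in the expansion `(M, c₁, …, cₙ)` of `M` by the
constants `c = (c₁, …, cₙ)`: equivalently, the concatenated tuples `(a, c)` and `(b, c)`
satisfy the same first-order `L`-formulas in `M`. -/
def SameTypeOver (L : Language) {M : Type} [L.Structure M] {k n : ℕ}
    (c : Fin n → M) (a b : Fin k → M) : Prop :=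
  ∀ φ : L.Formula (Fin k ⊕ Fin n), φ.Realize (Sum.elim a c) ↔ φ.Realize (Sum.elim b c)

/-- The `m`-ary operation `g` on `M` is canonical as a function on the expansion
`(M, c₁, …, cₙ)`: it sends tuples of equal type (computed coordinatewise in the power) to
tuples of equal type. -/
def CanonicalOn (L : Language) {M : Type} [L.Structure M] {m n : ℕ}
    (c : Fin n → M) (g : (Fin m → M) → M) : Prop :=
  ∀ (k : ℕ) (a b : Fin k → Fin m → M),
    (∀ i : Fin m, SameTypeOver L c (fun j => a j i) (fun j => b j i)) →
    SameTypeOver L c (fun j => g (a j)) (fun j => g (b j))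

/-- A function clone on `D`: an arity-indexed family of sets of finitary operations on `D`
(the index `n` corresponding to the `(n+1)`-ary operations, so that all arities are `≥ 1`)
containing all projections and closed under composition. -/
def IsClone {D : Type} (C : ∀ n : ℕ, Set ((Fin (n + 1) → D) → D)) : Prop :=
  (∀ (n : ℕ) (k : Fin (n + 1)), (fun v => v k) ∈ C n) ∧
  (∀ (n m : ℕ) (f : (Fin (n + 1) → D) → D) (g : Fin (n + 1) → (Fin (m + 1) → D) → D),
    f ∈ C n → (∀ i, g i ∈ C m) → (fun v => f fun i => g i v) ∈ C m)

open Set Structure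

namespace FirstOrder.Language

variable {L : Language} [L.IsRelational] {M : Type*} [L.Structure M] {ι : Type*}

theorem exists_embedding_closure_range_of_realize_iff (u v : ι → M)
    (h : ∀ φ : L.Formula ι, φ.Realize u ↔ φ.Realize v) :
    ∃ F : Substructure.closure L (range u) ↪[L] M,
      ∀ i, F ⟨u i, Substructure.subset_closure ⟨i, rfl⟩⟩ = v i := by
  have eq_iff (i j : ι) : u i = u j ↔ v i = v j := by
    simpa using h ((Term.var i).equal (Term.var j))
  have relMap_iff {l : ℕ} (r : L.Relations l) (t : Fin l → ι) :
      RelMap r (u ∘ t) ↔ RelMap r (v ∘ t) := by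
    simpa [Function.comp_def] using h (r.formula fun k => Term.var (t k))
  have exists_index (x : Substructure.closure L (range u)) : ∃ i, u i = x :=
    (Substructure.mem_closure_iff_of_isRelational L (range u) x).1 x.2
  choose index hindex using exists_index
  -- `Function.extend u v id` is the map `u i ↦ v i`, well defined by `eq_iff`.
  have hφ (i : ι) : Function.extend u v id (u i) = v i :=
    Function.FactorsThrough.extend_apply (fun i j hij => (eq_iff i j).1 hij) id i
  refine ⟨{ toFun := fun x => Function.extend u v id x
            inj' := fun x y hxy => Subtype.ext ?_
            map_fun' := fun f => isEmptyElim f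
            map_rel' := fun r x => ?_ }, hφ⟩
  · dsimp only at hxy
    rw [← hindex x, ← hindex y, hφ, hφ] at hxy
    rw [← hindex x, ← hindex y]
    exact (eq_iff _ _).2 hxy
  · have hu : Subtype.val ∘ x = u ∘ (index ∘ x) := funext fun k => (hindex (x k)).symm
    have hv : Function.extend u v id ∘ Subtype.val ∘ x = v ∘ (index ∘ x) := by
      rw [hu]
      exact funext fun k => hφ _
    change RelMap r (Function.extend u v id ∘ Subtype.val ∘ x) ↔ RelMap r (Subtype.val ∘ x)
    rw [hv, hu]
    exact (relMap_iff r _).symm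

theorem IsUltrahomogeneous.exists_equiv_comp_eq_of_realize_iff (hhom : L.IsUltrahomogeneous M)
    [Finite ι] (u v : ι → M) (h : ∀ φ : L.Formula ι, φ.Realize u ↔ φ.Realize v) :
    ∃ e : M ≃[L] M, e ∘ u = v := by
  obtain ⟨F, hF⟩ := exists_embedding_closure_range_of_realize_iff u v h
  obtain ⟨e, rfl⟩ := hhom _ (Substructure.fg_closure (finite_range u)) F
  exact ⟨e, funext hF⟩

end FirstOrder.Language

theorem mem_closure_of_forall_tuple_exists_agree {X Y : Type*} [TopologicalSpace Y]
    {S : Set (X → Y)} {g : X → Y} (h : ∀ (k : ℕ) (a : Fin k → X), ∃ f ∈ S, f ∘ a = g ∘ a) :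
    g ∈ closure S := by
  refine mem_closure_iff_nhds.2 fun U hU => ?_
  rw [nhds_pi, Filter.mem_pi'] at hU
  obtain ⟨I, t, ht, hIt⟩ := hU
  obtain ⟨f, hfS, hfg⟩ := h _ fun j => (I.equivFin.symm j).1
  refine ⟨f, hIt fun x hx => ?_, hfS⟩
  have hfx : f x = g x := by simpa using congrFun hfg (I.equivFin ⟨x, hx⟩)
  exact hfx ▸ mem_of_mem_nhds (ht x)

theorem IsClone.unary_comp_mem {D : Type} {C : ∀ n : ℕ, Set ((Fin (n + 1) → D) → D)}
    (hC : IsClone C) {u : (Fin 1 → D) → D} (hu : u ∈ C 0) {m : ℕ} {f : (Fin (m + 1) → D) → D}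
    (hf : f ∈ C m) : (fun v => u fun _ => f v) ∈ C m :=
  hC.2 0 m u (fun _ => f) hu fun _ => hf

theorem mem_of_mem_of_sameTypeOver {L : Language} [L.IsRelational] {M : Type} [L.Structure M]
    [TopologicalSpace M] (hhom : L.IsUltrahomogeneous M) {n : ℕ} {c : Fin n → M} {m : ℕ}
    {f g : (Fin (m + 1) → M) → M}
    (hsame : ∀ (k : ℕ) (a : Fin k → Fin (m + 1) → M),
      SameTypeOver L c (fun j => f (a j)) (fun j => g (a j)))
    {C : ∀ i : ℕ, Set ((Fin (i + 1) → M) → M)} (hclone : IsClone C) (hclosed : IsClosed (C m))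
    (haut : ∀ e : M ≃[L] M, (fun v : Fin 1 → M => e (v 0)) ∈ C 0) (hf : f ∈ C m) : g ∈ C m := by
  rw [← hclosed.closure_eq]
  refine mem_closure_of_forall_tuple_exists_agree fun k a => ?_
  obtain ⟨e, he⟩ := hhom.exists_equiv_comp_eq_of_realize_iff _ _ (hsame k a)
  exact ⟨fun v => e (f v), hclone.unary_comp_mem (haut e) hf, funext fun j => congrFun he (.inl j)⟩

theorem statement14_general (L : Language) [L.IsRelational]
    (M : Type) [L.Structure M]
    [TopologicalSpace M]
    (hhom : L.IsUltrahomogeneous M)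
    (n : ℕ) (c : Fin n → M) (m : ℕ)
    (f g : (Fin (m + 1) → M) → M)
    (hsame : ∀ (k : ℕ) (a : Fin k → Fin (m + 1) → M),
      SameTypeOver L c (fun j => f (a j)) (fun j => g (a j)))
    (C : ∀ i : ℕ, Set ((Fin (i + 1) → M) → M))
    (hclone : IsClone C) (hclosed : ∀ i, IsClosed (C i))
    (haut : ∀ e : M ≃[L] M, (fun v : Fin 1 → M => e (v 0)) ∈ C 0) :
    f ∈ C m ↔ g ∈ C m :=
  ⟨mem_of_mem_of_sameTypeOver hhom hsame hclone (hclosed m) haut,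
    mem_of_mem_of_sameTypeOver hhom (fun k a φ => (hsame k a φ).symm) hclone (hclosed m) haut⟩

/-- Let `Δ = M` be a countable homogeneous structure in a finite relational language, let
`c₁, …, cₙ ∈ M`, and let `f`, `g` be operations of the same arity on `M`, both canonical on
`(Δ, c₁, …, cₙ)`, with identical type functions (for every finite tuple of arguments, the
image tuples under `f` and under `g` have the same type in `(Δ, c₁, …, cₙ)`). Then for every
function clone `C` on `M` containing every automorphism of `Δ` and whose arity-wise parts are
closed in the topology of pointwise convergence, `f ∈ C` iff `g ∈ C`. -/
theorem statement14 (L : Language) [L.IsRelational] [Finite (Σ i, L.Relations i)]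
    (M : Type) [L.Structure M] [Countable M]
    [TopologicalSpace M] [DiscreteTopology M]
    (hhom : L.IsUltrahomogeneous M)
    (n : ℕ) (c : Fin n → M) (m : ℕ)
    (f g : (Fin (m + 1) → M) → M)
    (hf : CanonicalOn L c f) (hg : CanonicalOn L c g)
    (hsame : ∀ (k : ℕ) (a : Fin k → Fin (m + 1) → M),
      SameTypeOver L c (fun j => f (a j)) (fun j => g (a j)))
    (C : ∀ i : ℕ, Set ((Fin (i + 1) → M) → M))
    (hclone : IsClone C) (hclosed : ∀ i, IsClosed (C i))
    (haut : ∀ e : M ≃[L] M, (fun v : Fin 1 → M => e (v 0)) ∈ C 0) :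
    f ∈ C m ↔ g ∈ C m :=
  statement14_general L M hhom n c m f g hsame C hclone hclosed haut
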